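/- If there exists an SCCD(v,k,b) with excess e possessing an outer expansion set, then there exists an SCCD(v+2, k, b') with excess e + k − 2, where b' = b + 2v/(k−1) + 1. -/

import Mathlib

/-- A single change covering design `SCCD(v,k,b)`: a ground set `X` of size `v`
together with blocks `B 0, …, B (b-1)`, each a `k`-subset of `X`, such that
consecutive blocks share exactly `k-1` elements and every pair of distinct
elements of `X` occurs together in some block. -/
structure SCCD (v k b : ℕ) where
  X : Finset ℕ
  B : ℕ → Finset ℕ
  cardX : X.card = v
  cardB : ∀ i, i < b → (B i).card = k
  subX : ∀ i, i < b → B i ⊆ X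
  singleChange : ∀ i, i + 1 < b → (B i ∩ B (i + 1)).card = k - 1
  covers : ∀ x ∈ X, ∀ y ∈ X, x ≠ y → ∃ i, i < b ∧ x ∈ B i ∧ y ∈ B i

/-- A circular single change covering design: additionally the last and first
blocks share exactly `k-1` elements. -/
structure CSCCD (v k b : ℕ) extends SCCD v k b where
  circ : 0 < b → (toSCCD.B (b - 1) ∩ toSCCD.B 0).card = k - 1

/-- `g₁(v,k) = (C(v,2) − C(k,2))/(k−1) + 1`, the linear lower bound. -/
def g1 (v k : ℕ) : ℚ := ((v.choose 2 : ℚ) - (k.choose 2 : ℚ)) / ((k : ℚ) - 1) + 1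

/-- `g₂(v,k) = C(v,2)/(k−1)`, the circular lower bound. -/
def g2 (v k : ℕ) : ℚ := (v.choose 2 : ℚ) / ((k : ℚ) - 1)

/-- The excess of a (linear) `SCCD(v,k,b)`: `e = (k−1)b + C(k−1,2) − C(v,2)`. -/
def linExcess (v k b : ℕ) : ℤ :=
  ((k - 1 : ℕ) : ℤ) * b + ((k - 1).choose 2 : ℤ) - (v.choose 2 : ℤ)

/-- The excess of a circular `CSCCD(v,k,b)`: `e = (k−1)b − C(v,2)`. -/
def circExcess (v k b : ℕ) : ℤ :=
  ((k - 1 : ℕ) : ℤ) * b - (v.choose 2 : ℤ)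

/-- An `SCCD(v,k,b)` is economical when `b = ⌈g₁(v,k)⌉`. -/
def EconomicalLin (v k b : ℕ) : Prop := (b : ℤ) = ⌈g1 v k⌉

/-- An `SCCD(v,k,b)` is tight when `b = g₁(v,k)` (in particular `g₁` is an integer). -/
def TightLin (v k b : ℕ) : Prop := (b : ℚ) = g1 v k

/-- A `CSCCD(v,k,b)` is economical when `b = ⌈g₂(v,k)⌉`. -/
def EconomicalCirc (v k b : ℕ) : Prop := (b : ℤ) = ⌈g2 v k⌉

/-- A `CSCCD(v,k,b)` is tight when `b = g₂(v,k)` (in particular `g₂` is an integer). -/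
def TightCirc (v k b : ℕ) : Prop := (b : ℚ) = g2 v k

namespace SCCD

variable {v k b : ℕ}

/-- The set of elements introduced in block `i`: all of `B 0` for `i = 0`,
and `B i \ B (i-1)` otherwise. -/
def introduced (D : SCCD v k b) (i : ℕ) : Finset ℕ :=
  if i = 0 then D.B 0 else D.B i \ D.B (i - 1)

/-- The pair `s` is covered on block `i`. -/
def coveredOn (D : SCCD v k b) (i : ℕ) (s : Finset ℕ) : Prop :=
  i < b ∧ s.card = 2 ∧ s ⊆ D.B i ∧ (s ∩ D.introduced i).Nonempty

/-- The excess of block `i`: the number of pairs covered on `B i` that are also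
covered on some earlier block. -/
noncomputable def blockExcess (D : SCCD v k b) (i : ℕ) : ℕ :=
  {s : Finset ℕ | D.coveredOn i s ∧ ∃ j < i, D.coveredOn j s}.ncard

/-- Block `i` is tight: no pair covered on it is covered on any other block. -/
def TightBlock (D : SCCD v k b) (i : ℕ) : Prop :=
  ∀ s, D.coveredOn i s → ∀ j, j < b → j ≠ i → ¬ D.coveredOn j s

/-- `S` is an inner unchanged subset, i.e. the intersection of two
consecutive blocks. -/
def IsInnerUnchanged (D : SCCD v k b) (S : Finset ℕ) : Prop :=
  ∃ i, i + 1 < b ∧ S = D.B i ∩ D.B (i + 1)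

/-- `S` may serve as the outer unchanged subset `U₀`: a `(k−1)`-subset of the
first block. -/
def IsU0 (D : SCCD v k b) (S : Finset ℕ) : Prop :=
  0 < b ∧ S ⊆ D.B 0 ∧ S.card = k - 1

/-- `S` may serve as the outer unchanged subset `U_b`: a `(k−1)`-subset of the
last block. -/
def IsUb (D : SCCD v k b) (S : Finset ℕ) : Prop :=
  0 < b ∧ S ⊆ D.B (b - 1) ∧ S.card = k - 1

/-- `S` is an unchanged subset (inner, or one of the outer choices). -/
def IsUnchanged (D : SCCD v k b) (S : Finset ℕ) : Prop :=
  D.IsInnerUnchanged S ∨ D.IsU0 S ∨ D.IsUb S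

/-- `E` is an expansion set: `v/(k−1)` pairwise disjoint unchanged subsets
whose union is `X`. -/
def IsExpansionSet (D : SCCD v k b) (E : Finset (Finset ℕ)) : Prop :=
  E.card = v / (k - 1) ∧ (∀ S ∈ E, D.IsUnchanged S) ∧
  (E : Set (Finset ℕ)).Pairwise Disjoint ∧ E.sup id = D.X

/-- `E` is an outer expansion set: it contains `U₀` or `U_b`. -/
def IsOuterExpansionSet (D : SCCD v k b) (E : Finset (Finset ℕ)) : Prop :=
  D.IsExpansionSet E ∧ ((∃ S ∈ E, D.IsU0 S) ∨ (∃ S ∈ E, D.IsUb S))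

/-- `E` is an outer expansion set containing both `U₀` and `U_b`. -/
def IsDoubleOuterExpansionSet (D : SCCD v k b) (E : Finset (Finset ℕ)) : Prop :=
  D.IsExpansionSet E ∧ (∃ S ∈ E, D.IsU0 S) ∧ (∃ S ∈ E, D.IsUb S)

/-- `E` is a disjoint-capable outer expansion set: it contains both `U₀` and
`U_b`, `U₀ = U₁ = ⋯ = U_{k−1}`, and `U_b = ⋃_{i=1}^{k−1} (B_i \ B_{i+1})`
(written here with blocks indexed from `0`). -/
def IsDisjointCapable (D : SCCD v k b) (E : Finset (Finset ℕ)) : Prop :=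
  D.IsExpansionSet E ∧ k ≤ b ∧
  ∃ S0 ∈ E, ∃ Sb ∈ E, D.IsU0 S0 ∧ D.IsUb Sb ∧
    (∀ i, i < k - 1 → S0 = D.B i ∩ D.B (i + 1)) ∧
    Sb = (Finset.range (k - 1)).biUnion (fun i => D.B i \ D.B (i + 1))

end SCCD

namespace CSCCD

variable {v k b : ℕ}

/-- `S` is an unchanged subset of a circular design (indices taken mod `b`). -/
def IsUnchanged (D : CSCCD v k b) (S : Finset ℕ) : Prop :=
  (∃ i, i + 1 < b ∧ S = D.toSCCD.B i ∩ D.toSCCD.B (i + 1)) ∨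
  (0 < b ∧ S = D.toSCCD.B (b - 1) ∩ D.toSCCD.B 0)

/-- `E` is an expansion set of a circular design. -/
def IsExpansionSet (D : CSCCD v k b) (E : Finset (Finset ℕ)) : Prop :=
  E.card = v / (k - 1) ∧ (∀ S ∈ E, D.IsUnchanged S) ∧
  (E : Set (Finset ℕ)).Pairwise Disjoint ∧ E.sup id = D.toSCCD.X

end CSCCD

/-!
Add two new points `x` and `y`. Each member `S` of the expansion set is a `(k-1)`-subset of two
consecutive blocks (or of the first or last block), so the blocks `S ∪ {x}`, `S ∪ {y}` can be
spliced into the gap next to it without breaking the single change property. These `2v/(k-1)`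
new blocks cover all pairs `{x, z}` and `{y, z}`. For one member `T` and some `s ∈ T`, the
block `M = {x, y} ∪ (T \ {s})`, placed between `T ∪ {x}` and `T ∪ {y}`, covers `{x, y}`.
Several members of the expansion set can share a gap only when `k = 2`, and then their detours
are chained through a common new point. The excess identity is arithmetic once `v = |E| (k-1)`.
-/

open Finset

section Finset

variable {α : Type*} [DecidableEq α]

theorem card_insert_inter_insert {S S' : Finset α} (c : α) (h : Disjoint S S') :
    (insert c S ∩ insert c S').card = 1 := by
  rw [← insert_inter_distrib, disjoint_iff_inter_eq_empty.1 h, insert_empty, card_singleton]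

theorem card_le_two_of_disjoint_subset {A S S' : Finset α} {k : ℕ} (hS : S ⊆ A)
    (hS' : S' ⊆ A) (h : Disjoint S S') (hSc : S.card = k - 1) (hS'c : S'.card = k - 1)
    (hA : A.card = k) : k ≤ 2 := by
  have := card_le_card (union_subset hS hS')
  rw [card_union_of_disjoint h] at this
  omega

theorem card_inter_insert_of_subset {A S : Finset α} {c : α} (hS : S ⊆ A) (hc : c ∉ A) :
    (A ∩ insert c S).card = S.card := by
  rw [inter_insert_of_notMem hc, inter_eq_right.2 hS]

theorem card_insert_insert_erase {T : Finset α} {x y s : α} (hxy : x ≠ y) (hxT : x ∉ T)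
    (hyT : y ∉ T) (hs : s ∈ T) : (insert x (insert y (T.erase s))).card = T.card + 1 := by
  rw [card_insert_of_notMem (by simp [hxy, hxT]),
    card_insert_of_notMem fun h => hyT (mem_of_mem_erase h), card_erase_add_one hs]

theorem card_insert_inter_insert_insert_erase {T : Finset α} {x y s c : α} (hxT : x ∉ T)
    (hyT : y ∉ T) (hs : s ∈ T) (hc : c = x ∨ c = y) :
    (insert c T ∩ insert x (insert y (T.erase s))).card = T.card := by
  have : insert c T ∩ insert x (insert y (T.erase s)) = insert c (T.erase s) := by
    ext a
    simp only [mem_inter, mem_insert, mem_erase]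
    grind
  have hcT : c ∉ T := by rcases hc with rfl | rfl <;> assumption
  rw [this, card_insert_of_notMem fun h => hcT (mem_of_mem_erase h), card_erase_add_one hs]

end Finset

section Interleave

variable {α : Type*} (B : ℕ → α) (Z : ℕ → List α)

def interleaveSlots : ℕ → List α
  | 0 => Z 0
  | n + 1 => interleaveSlots n ++ B n :: Z (n + 1)

theorem length_interleaveSlots (n : ℕ) :
    (interleaveSlots B Z n).length = n + ∑ t ∈ range (n + 1), (Z t).length := by
  induction n with
  | zero => simp [interleaveSlots]
  | succ n ih =>
    rw [interleaveSlots, List.length_append, List.length_cons, ih, sum_range_succ _ (n + 1)]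
    ring

theorem mem_interleaveSlots {a : α} {n : ℕ} :
    a ∈ interleaveSlots B Z n ↔ (∃ i < n, a = B i) ∨ ∃ t ≤ n, a ∈ Z t := by
  induction n with
  | zero => simp [interleaveSlots]
  | succ n ih =>
    simp only [interleaveSlots, List.mem_append, List.mem_cons, ih]
    constructor
    · rintro ((⟨i, hi, rfl⟩ | ⟨t, ht, h⟩) | rfl | h)
      · exact .inl ⟨i, by omega, rfl⟩
      · exact .inr ⟨t, by omega, h⟩
      · exact .inl ⟨n, by omega, rfl⟩
      · exact .inr ⟨n + 1, le_rfl, h⟩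
    · rintro (⟨i, hi, rfl⟩ | ⟨t, ht, h⟩)
      · rcases Nat.lt_succ_iff_lt_or_eq.1 hi with hi | rfl
        · exact .inl (.inl ⟨i, hi, rfl⟩)
        · exact .inr (.inl rfl)
      · rcases Nat.le_succ_iff.1 ht with ht | rfl
        · exact .inl (.inr ⟨t, ht, h⟩)
        · exact .inr (.inr h)

theorem isChain_interleaveSlots {R : α → α → Prop} {b : ℕ}
    (hZ : ∀ t ≤ b, (Z t).IsChain R)
    (hB : ∀ i, i + 1 < b → R (B i) (B (i + 1)))
    (hhead : ∀ i < b, ∀ z ∈ (Z (i + 1)).head?, R (B i) z)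
    (hlast : ∀ t < b, ∀ z ∈ (Z t).getLast?, R z (B t)) :
    (interleaveSlots B Z b).IsChain R := by
  suffices ∀ n ≤ b, (interleaveSlots B Z n).IsChain R ∧
      (n < b → ∀ z ∈ (interleaveSlots B Z n).getLast?, R z (B n)) from (this b le_rfl).1
  intro n hn
  induction n with
  | zero => exact ⟨hZ 0 hn, hlast 0⟩
  | succ n ih =>
    obtain ⟨ihc, ihl⟩ := ih (by omega)
    refine ⟨List.isChain_append.2 ⟨ihc, List.isChain_cons.2 ⟨hhead n (by omega), hZ _ hn⟩,
      fun z hz w hw => ?_⟩, fun hlt z hz => ?_⟩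
    · obtain rfl : w = B n := by simpa using hw.symm
      exact ihl (by omega) z hz
    · rw [interleaveSlots, List.getLast?_append_cons, List.getLast?_cons] at hz
      cases h : (Z (n + 1)).getLast? with
      | none =>
        obtain rfl : z = B n := by simpa [h] using hz.symm
        exact hB n hlt
      | some w =>
        obtain rfl : z = w := by simpa [h] using hz.symm
        exact hlast (n + 1) hlt z h

end Interleave

section Zigzag

variable {α : Type*} [DecidableEq α] (T M : Finset α)

def detour (c d : α) (S : Finset α) : List (Finset α) :=
  if S = T then [insert c S, M, insert d S] else [insert c S, insert d S]

/-- Consecutive detours run in opposite directions, so that at each junction the blocks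
`S ∪ {d}` and `S' ∪ {d}` still share the point `d`; this is a single change when `k = 2`. -/
def zigzag : α → α → List (Finset α) → List (Finset α)
  | _, _, [] => []
  | c, d, S :: l => detour T M c d S ++ zigzag d c l

variable {T M}

theorem length_zigzag (c d : α) (l : List (Finset α)) :
    (zigzag T M c d l).length = (l.map fun S => if S = T then 3 else 2).sum := by
  induction l generalizing c d with
  | nil => rfl
  | cons S l ih =>
    rw [zigzag, List.length_append, ih, List.map_cons, List.sum_cons, detour]
    split <;> rfl

theorem mem_zigzag {c d : α} {l : List (Finset α)} {A : Finset α}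
    (h : A ∈ zigzag T M c d l) : A = M ∨ ∃ S ∈ l, A = insert c S ∨ A = insert d S := by
  induction l generalizing c d with
  | nil => simp [zigzag] at h
  | cons S l ih =>
    rw [zigzag, List.mem_append, detour] at h
    rcases h with h | h
    · split at h <;> simp at h <;> grind
    · obtain h | ⟨S', hS', h⟩ := ih h
      · exact .inl h
      · exact .inr ⟨S', List.mem_cons_of_mem _ hS', h.symm⟩

theorem insert_mem_zigzag {c d : α} {l : List (Finset α)} {S : Finset α} (hS : S ∈ l) :
    insert c S ∈ zigzag T M c d l ∧ insert d S ∈ zigzag T M c d l := by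
  induction l generalizing c d with
  | nil => simp at hS
  | cons S' l ih =>
    rw [zigzag, List.mem_append, List.mem_append, detour]
    rcases List.mem_cons.1 hS with rfl | hS
    · split <;> simp
    · exact ⟨.inr (ih hS).2, .inr (ih hS).1⟩

theorem mem_zigzag_of_mem {c d : α} {l : List (Finset α)} (hT : T ∈ l) :
    M ∈ zigzag T M c d l := by
  induction l generalizing c d with
  | nil => simp at hT
  | cons S l ih =>
    rw [zigzag, List.mem_append, detour]
    rcases List.mem_cons.1 hT with rfl | hT
    · simp
    · exact .inr (ih hT)

theorem head?_zigzag (c d : α) (S : Finset α) (l : List (Finset α)) :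
    (zigzag T M c d (S :: l)).head? = some (insert c S) := by
  rw [zigzag, detour]
  split <;> simp

theorem mem_getLast?_zigzag {c d : α} {l : List (Finset α)} {A : Finset α}
    (h : A ∈ (zigzag T M c d l).getLast?) : ∃ S ∈ l, A = insert c S ∨ A = insert d S := by
  induction l generalizing c d with
  | nil => simp [zigzag] at h
  | cons S l ih =>
    cases l with
    | nil =>
      rw [zigzag, zigzag, List.append_nil, detour] at h
      exact ⟨S, List.mem_singleton_self S, .inr (by split at h <;> simpa using h.symm)⟩
    | cons S' l =>
      rw [zigzag, List.getLast?_append_of_ne_nil _ (by simp [zigzag, detour]; split <;> simp)] at h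
      obtain ⟨S'', hS'', h⟩ := ih h
      exact ⟨S'', List.mem_cons_of_mem _ hS'', h.symm⟩

theorem isChain_detour {k : ℕ} {c d : α} {S : Finset α} (hcd : c ≠ d) (hc : c ∉ S)
    (hd : d ∉ S) (hS : S.card = k - 1) (hcM : (insert c T ∩ M).card = k - 1)
    (hdM : (insert d T ∩ M).card = k - 1) :
    (detour T M c d S).IsChain fun A A' => (A ∩ A').card = k - 1 := by
  have hcdS : insert c S ∩ insert d S = S := by
    rw [insert_inter_of_notMem (by simp [hcd, hc]), inter_insert_of_notMem hd, inter_self]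
  rw [detour]
  split
  · subst S
    simp only [List.isChain_cons_cons, List.isChain_singleton, and_true]
    exact ⟨hcM, by rw [inter_comm, hdM]⟩
  · simp [hcdS, hS]

theorem isChain_zigzag {X : Finset α} {k : ℕ} {c d : α} {l : List (Finset α)} (hcd : c ≠ d)
    (hc : c ∉ X) (hd : d ∉ X) (hcM : (insert c T ∩ M).card = k - 1)
    (hdM : (insert d T ∩ M).card = k - 1) (hl : ∀ S ∈ l, S ⊆ X ∧ S.card = k - 1)
    (hpair : l.Pairwise fun S S' => Disjoint S S' ∧ k = 2) :
    (zigzag T M c d l).IsChain fun A A' => (A ∩ A').card = k - 1 := by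
  induction l generalizing c d with
  | nil => simp [zigzag]
  | cons S l ih =>
    obtain ⟨hSX, hS⟩ := hl S List.mem_cons_self
    rw [List.pairwise_cons] at hpair
    refine List.isChain_append.2 ⟨isChain_detour hcd (fun h => hc (hSX h)) (fun h => hd (hSX h))
      hS hcM hdM, ih hcd.symm hd hc hdM hcM (fun S' hS' => hl S' (.tail _ hS')) hpair.2, ?_⟩
    intro A hA A' hA'
    cases l with
    | nil => simp [zigzag] at hA'
    | cons S' l =>
      obtain ⟨hdisj, rfl⟩ := hpair.1 S' List.mem_cons_self
      have hA : A = insert d S := by rw [detour] at hA; split at hA <;> simpa using hA.symm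
      rw [head?_zigzag, Option.mem_some_iff] at hA'
      rw [hA, ← hA', card_insert_inter_insert d hdisj]

end Zigzag

namespace SCCD

def ofList {k : ℕ} (X : Finset ℕ) (L : List (Finset ℕ))
    (hL : ∀ A ∈ L, A.card = k ∧ A ⊆ X)
    (hchain : L.IsChain fun A A' => (A ∩ A').card = k - 1)
    (hcov : ∀ a ∈ X, ∀ c ∈ X, a ≠ c → ∃ A ∈ L, a ∈ A ∧ c ∈ A) :
    SCCD X.card k L.length where
  X := X
  B n := L.getD n ∅
  cardX := rfl
  cardB i hi := by rw [List.getD_eq_getElem _ _ hi]; exact (hL _ (List.getElem_mem hi)).1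
  subX i hi := by rw [List.getD_eq_getElem _ _ hi]; exact (hL _ (List.getElem_mem hi)).2
  singleChange i hi := by
    rw [List.getD_eq_getElem _ _ (by omega), List.getD_eq_getElem _ _ hi]
    exact List.isChain_iff_getElem.1 hchain i hi
  covers a ha c hc hac := by
    obtain ⟨A, hA, haA, hcA⟩ := hcov a ha c hc hac
    obtain ⟨n, hn, rfl⟩ := List.mem_iff_getElem.1 hA
    refine ⟨n, hn, ?_⟩
    simp only [List.getD_eq_getElem _ _ hn]
    exact ⟨haA, hcA⟩

variable {v k b : ℕ} {D : SCCD v k b} {E : Finset (Finset ℕ)} {S : Finset ℕ}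

theorem IsUnchanged.card_eq (h : D.IsUnchanged S) : S.card = k - 1 := by
  rcases h with ⟨i, hi, rfl⟩ | ⟨-, -, h⟩ | ⟨-, -, h⟩
  exacts [D.singleChange i hi, h, h]

theorem IsExpansionSet.subset (hE : D.IsExpansionSet E) (hS : S ∈ E) : S ⊆ D.X :=
  hE.2.2.2 ▸ le_sup (f := id) hS

theorem IsExpansionSet.card_eq_mul (hE : D.IsExpansionSet E) : v = E.card * (k - 1) := by
  rw [← D.cardX, ← hE.2.2.2, sup_eq_biUnion, card_biUnion (t := id) hE.2.2.1]
  exact sum_const_nat fun S hS => (hE.2.1 S hS).card_eq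

/-- Slot `t` is the gap between `B (t-1)` and `B t`; slot `0` lies before the first block and
slot `b` after the last one. -/
def FitsSlot (D : SCCD v k b) (t : ℕ) (S : Finset ℕ) : Prop :=
  t ≤ b ∧ (∀ i, i + 1 = t → S ⊆ D.B i) ∧ (t < b → S ⊆ D.B t)

theorem IsUnchanged.exists_fitsSlot (h : D.IsUnchanged S) : ∃ t, D.FitsSlot t S := by
  rcases h with ⟨i, hi, rfl⟩ | ⟨-, hS, -⟩ | ⟨hb, hS, -⟩
  · refine ⟨i + 1, by omega, fun j hj => ?_, fun _ => inter_subset_right⟩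
    obtain rfl : j = i := by omega
    exact inter_subset_left
  · exact ⟨0, Nat.zero_le _, fun i hi => absurd hi (by omega), fun _ => hS⟩
  · exact ⟨b, le_rfl, fun i hi => by rwa [show i = b - 1 by omega],
      fun h => absurd h (lt_irrefl b)⟩

theorem FitsSlot.card_le_two {t : ℕ} {S' : Finset ℕ} (hb : 0 < b) (hS : D.FitsSlot t S)
    (hS' : D.FitsSlot t S') (h : Disjoint S S') (hSc : S.card = k - 1)
    (hS'c : S'.card = k - 1) : k ≤ 2 := by
  rcases t with - | i
  · exact card_le_two_of_disjoint_subset (hS.2.2 hb) (hS'.2.2 hb) h hSc hS'c (D.cardB 0 hb)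
  · exact card_le_two_of_disjoint_subset (hS.2.1 i rfl) (hS'.2.1 i rfl) h hSc hS'c
      (D.cardB i (by have := hS.1; omega))

noncomputable def extendedBlocks (D : SCCD v k b) (E : Finset (Finset ℕ))
    (slot : Finset ℕ → ℕ) (T M : Finset ℕ) (x y : ℕ) : List (Finset ℕ) :=
  interleaveSlots D.B (fun t => zigzag T M x y (E.filter (slot · = t)).toList) b

variable {slot : Finset ℕ → ℕ} {T M : Finset ℕ} {x y : ℕ}

theorem length_extendedBlocks (hslot : ∀ S ∈ E, slot S ≤ b) (hT : T ∈ E) :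
    (D.extendedBlocks E slot T M x y).length = b + 2 * E.card + 1 := by
  rw [extendedBlocks, length_interleaveSlots]
  simp_rw [length_zigzag, sum_map_toList]
  rw [sum_fiberwise_of_maps_to fun S hS => mem_range.2 (Nat.lt_succ_of_le (hslot S hS))]
  have h32 : ∀ S : Finset ℕ, (if S = T then 3 else 2) = 2 + if S = T then 1 else 0 := by
    intro S; split <;> rfl
  simp_rw [h32, sum_add_distrib, sum_const, smul_eq_mul, sum_ite_eq', if_pos hT]
  ring

theorem mem_extendedBlocks {A : Finset ℕ} (h : A ∈ D.extendedBlocks E slot T M x y) :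
    (∃ i < b, A = D.B i) ∨ A = M ∨ ∃ S ∈ E, A = insert x S ∨ A = insert y S := by
  rcases (mem_interleaveSlots _ _).1 h with h | ⟨t, -, h⟩
  · exact .inl h
  rcases mem_zigzag h with h | ⟨S, hS, h⟩
  · exact .inr (.inl h)
  · exact .inr (.inr ⟨S, (mem_filter.1 (mem_toList.1 hS)).1, h⟩)

theorem block_mem_extendedBlocks {i : ℕ} (hi : i < b) :
    D.B i ∈ D.extendedBlocks E slot T M x y :=
  (mem_interleaveSlots _ _).2 (.inl ⟨i, hi, rfl⟩)

theorem insert_mem_extendedBlocks (hslot : slot S ≤ b) (hS : S ∈ E) :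
    insert x S ∈ D.extendedBlocks E slot T M x y ∧
      insert y S ∈ D.extendedBlocks E slot T M x y := by
  have hSl : S ∈ (E.filter (slot · = slot S)).toList := by simp [hS]
  exact ⟨(mem_interleaveSlots _ _).2 (.inr ⟨_, hslot, (insert_mem_zigzag hSl).1⟩),
    (mem_interleaveSlots _ _).2 (.inr ⟨_, hslot, (insert_mem_zigzag hSl).2⟩)⟩

theorem mem_extendedBlocks_of_mem (hslot : slot T ≤ b) (hT : T ∈ E) :
    M ∈ D.extendedBlocks E slot T M x y := by
  have hTl : T ∈ (E.filter (slot · = slot T)).toList := by simp [hT]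
  exact (mem_interleaveSlots _ _).2 (.inr ⟨_, hslot, mem_zigzag_of_mem hTl⟩)

theorem isChain_extendedBlocks (hE : D.IsExpansionSet E) (hk : 2 ≤ k) (hb : 0 < b)
    (hslot : ∀ S ∈ E, D.FitsSlot (slot S) S) (hxy : x ≠ y) (hx : x ∉ D.X) (hy : y ∉ D.X)
    (hxM : (insert x T ∩ M).card = k - 1) (hyM : (insert y T ∩ M).card = k - 1) :
    (D.extendedBlocks E slot T M x y).IsChain fun A A' => (A ∩ A').card = k - 1 := by
  have hmem {t S} : S ∈ (E.filter (slot · = t)).toList ↔ S ∈ E ∧ slot S = t := by simp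
  have hfits {t S} (hS : S ∈ (E.filter (slot · = t)).toList) : D.FitsSlot t S := by
    obtain ⟨hSE, rfl⟩ := hmem.1 hS
    exact hslot S hSE
  have hjoint {t S} {A : Finset ℕ} (hS : S ∈ (E.filter (slot · = t)).toList) (hSA : S ⊆ A)
      (hA : A ⊆ D.X) {c : ℕ} (hc : c ∉ D.X) : (A ∩ insert c S).card = k - 1 := by
    rw [card_inter_insert_of_subset hSA fun h => hc (hA h), (hE.2.1 S (hmem.1 hS).1).card_eq]
  refine isChain_interleaveSlots _ _ (fun t _ => ?_) D.singleChange (fun i hi A hA => ?_)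
    (fun t ht A hA => ?_)
  · refine isChain_zigzag hxy hx hy hxM hyM
      (fun S hS => ⟨hE.subset (hmem.1 hS).1, (hE.2.1 S (hmem.1 hS).1).card_eq⟩) ?_
    refine (nodup_toList _).pairwise_of_set_pairwise fun S hS S' hS' hne => ?_
    have hdisj := hE.2.2.1 (hmem.1 hS).1 (hmem.1 hS').1 hne
    refine ⟨hdisj, le_antisymm ((hfits hS).card_le_two hb (hfits hS') hdisj ?_ ?_) hk⟩
    exacts [(hE.2.1 S (hmem.1 hS).1).card_eq, (hE.2.1 S' (hmem.1 hS').1).card_eq]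
  · rcases h : (E.filter (slot · = i + 1)).toList with - | ⟨S, l⟩
    · simp [h, zigzag] at hA
    · have hS : S ∈ (E.filter (slot · = i + 1)).toList := by simp [h]
      rw [h, head?_zigzag, Option.mem_some_iff] at hA
      rw [← hA]
      exact hjoint hS ((hfits hS).2.1 i rfl) (D.subX i hi) hx
  · obtain ⟨S, hS, rfl | rfl⟩ := mem_getLast?_zigzag hA <;> rw [inter_comm]
    exacts [hjoint hS ((hfits hS).2.2 ht) (D.subX t ht) hx,
      hjoint hS ((hfits hS).2.2 ht) (D.subX t ht) hy]

theorem card_eq_and_subset_of_mem_extendedBlocks (hE : D.IsExpansionSet E) (hk : 1 ≤ k)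
    (hx : x ∉ D.X) (hy : y ∉ D.X) (hM : M.card = k ∧ M ⊆ insert x (insert y D.X))
    {A : Finset ℕ} (hA : A ∈ D.extendedBlocks E slot T M x y) :
    A.card = k ∧ A ⊆ insert x (insert y D.X) := by
  have hXX' : D.X ⊆ insert x (insert y D.X) := (subset_insert _ _).trans (subset_insert _ _)
  rcases mem_extendedBlocks hA with ⟨i, hi, rfl⟩ | rfl | ⟨S, hS, rfl | rfl⟩
  · exact ⟨D.cardB i hi, (D.subX i hi).trans hXX'⟩
  · exact hM
  · refine ⟨?_, insert_subset_insert _ ((hE.subset hS).trans (subset_insert _ _))⟩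
    rw [card_insert_of_notMem fun h => hx (hE.subset hS h), (hE.2.1 S hS).card_eq]
    omega
  · refine ⟨?_, (insert_subset_insert _ (hE.subset hS)).trans (subset_insert _ _)⟩
    rw [card_insert_of_notMem fun h => hy (hE.subset hS h), (hE.2.1 S hS).card_eq]
    omega

theorem exists_mem_extendedBlocks_of_ne (hE : D.IsExpansionSet E)
    (hslot : ∀ S ∈ E, slot S ≤ b) (hT : T ∈ E) (hxM : x ∈ M) (hyM : y ∈ M) {a c : ℕ}
    (ha : a ∈ insert x (insert y D.X)) (hc : c ∈ insert x (insert y D.X)) (hac : a ≠ c) :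
    ∃ A ∈ D.extendedBlocks E slot T M x y, a ∈ A ∧ c ∈ A := by
  have hML := mem_extendedBlocks_of_mem (D := D) (M := M) (x := x) (y := y) (hslot T hT) hT
  have hnew {e} (he : e = x ∨ e = y) {z} (hz : z ∈ D.X) :
      ∃ A ∈ D.extendedBlocks E slot T M x y, e ∈ A ∧ z ∈ A := by
    obtain ⟨S, hS, hzS⟩ := mem_sup.1 (hE.2.2.2 ▸ hz : z ∈ E.sup id)
    have hSL := insert_mem_extendedBlocks (D := D) (T := T) (M := M) (x := x) (y := y)
      (hslot S hS) hS
    rcases he with rfl | rfl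
    exacts [⟨_, hSL.1, mem_insert_self _ _, mem_insert_of_mem hzS⟩,
      ⟨_, hSL.2, mem_insert_self _ _, mem_insert_of_mem hzS⟩]
  rw [mem_insert, mem_insert] at ha hc
  rcases ha with rfl | rfl | ha <;> rcases hc with rfl | rfl | hc
  · exact absurd rfl hac
  · exact ⟨M, hML, hxM, hyM⟩
  · exact hnew (.inl rfl) hc
  · exact ⟨M, hML, hyM, hxM⟩
  · exact absurd rfl hac
  · exact hnew (.inr rfl) hc
  · obtain ⟨A, hA, h⟩ := hnew (.inl rfl) ha
    exact ⟨A, hA, h.symm⟩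
  · obtain ⟨A, hA, h⟩ := hnew (.inr rfl) ha
    exact ⟨A, hA, h.symm⟩
  · obtain ⟨i, hi, h⟩ := D.covers a ha c hc hac
    exact ⟨_, block_mem_extendedBlocks hi, h⟩

theorem IsExpansionSet.nonempty_extension (hE : D.IsExpansionSet E) (hk : 2 ≤ k) (hb : 0 < b)
    {T : Finset ℕ} (hT : T ∈ E) : Nonempty (SCCD (v + 2) k (b + 2 * E.card + 1)) := by
  obtain ⟨x, hx⟩ := Infinite.exists_notMem_finset D.X
  obtain ⟨y, hy⟩ := Infinite.exists_notMem_finset (insert x D.X)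
  rw [mem_insert, not_or] at hy
  obtain ⟨hyx, hy⟩ := hy
  have hxy : x ≠ y := Ne.symm hyx
  set X' := insert x (insert y D.X)
  have hX' : X'.card = v + 2 := by
    rw [card_insert_of_notMem (by simp [hxy, hx]), card_insert_of_notMem hy, D.cardX]
  have hTcard : T.card = k - 1 := (hE.2.1 T hT).card_eq
  obtain ⟨s, hs⟩ : T.Nonempty := card_pos.1 (by omega)
  set M := insert x (insert y (T.erase s))
  have hTX := hE.subset hT
  have hxT : x ∉ T := fun h => hx (hTX h)
  have hyT : y ∉ T := fun h => hy (hTX h)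
  have hM {c} (hc : c = x ∨ c = y) : (insert c T ∩ M).card = k - 1 := by
    rw [card_insert_inter_insert_insert_erase hxT hyT hs hc, hTcard]
  choose! slot hslot using fun S hS => (hE.2.1 S hS).exists_fitsSlot
  have hMX' : M.card = k ∧ M ⊆ X' := by
    refine ⟨?_, insert_subset_insert _ (insert_subset_insert _ ((erase_subset s T).trans hTX))⟩
    rw [card_insert_insert_erase hxy hxT hyT hs, hTcard]
    omega
  rw [← hX', ← length_extendedBlocks (fun S hS => (hslot S hS).1) hT]
  exact ⟨ofList X' _
    (fun A hA => card_eq_and_subset_of_mem_extendedBlocks hE (by omega) hx hy hMX' hA)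
    (isChain_extendedBlocks hE hk hb hslot hxy hx hy (hM (.inl rfl)) (hM (.inr rfl)))
    fun a ha c hc hac => exists_mem_extendedBlocks_of_ne hE (fun S hS => (hslot S hS).1) hT
      (by simp [M]) (by simp [M]) ha hc hac⟩

end SCCD

theorem linExcess_add_two {v k b r : ℕ} (hk : 1 ≤ k) (hv : v = r * (k - 1)) :
    linExcess (v + 2) k (b + 2 * r + 1) = linExcess v k b + k - 2 := by
  have hchoose : (v + 2).choose 2 = v.choose 2 + 2 * v + 1 := by
    have h1 : (v + 2).choose 2 = (v + 1).choose 1 + (v + 1).choose 2 := Nat.choose_succ_succ' _ _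
    have h2 : (v + 1).choose 2 = v.choose 1 + v.choose 2 := Nat.choose_succ_succ' _ _
    rw [Nat.choose_one_right] at h1 h2
    omega
  simp only [linExcess, hchoose]
  subst hv
  push_cast [Nat.cast_sub hk]
  ring

/-- From an `SCCD(v,k,b)` with excess `e` possessing an outer
expansion set, one obtains an `SCCD(v+2, k, b + 2v/(k−1) + 1)` with excess
`e + k − 2`. -/
theorem stmt8 (v k b : ℕ) (D : SCCD v k b) (E : Finset (Finset ℕ))
    (hE : D.IsOuterExpansionSet E) :
    ∃ _D' : SCCD (v + 2) k (b + 2 * (v / (k - 1)) + 1),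
      linExcess (v + 2) k (b + 2 * (v / (k - 1)) + 1)
        = linExcess v k b + (k : ℤ) - 2 := by
  obtain ⟨hE, hT⟩ := hE
  obtain ⟨T, hT, hb⟩ : ∃ T ∈ E, 0 < b := by
    rcases hT with ⟨T, hT, hb, -⟩ | ⟨T, hT, hb, -⟩ <;> exact ⟨T, hT, hb⟩
  have hk : 2 ≤ k := by
    by_contra! hk
    have : E.card = 0 := by rw [hE.1, show k - 1 = 0 by omega, Nat.div_zero]
    simp [card_eq_zero.1 this] at hT
  obtain ⟨D'⟩ := hE.nonempty_extension hk hb hT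
  rw [hE.1] at D'
  exact ⟨D', linExcess_add_two (by omega) (hE.1 ▸ hE.card_eq_mul)⟩
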